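/- For all positive integers r, m, s, the following identity holds in the field of rational functions ℚ(t): W(r,m,s)′/W(r,m,s) = −s/t + (m−r+s−1)/(t−1) − ((r+1)/(t(t−1)))·(r(m+s)·z − (r+m+1)·t·((t−1)z′ + rz))/((s−r−1)z′ + (r+m+1)(tz′ + rz)). -/

import Mathlib

/-!
The coefficients `a_k` of `z = ₂F₁(r, -m; s; t)` satisfy `(k+1)(k+s) a_{k+1} = (k+r)(k-m) a_k`,
i.e. `z` solves the hypergeometric equation `t(1-t) z'' + (s - (r-m+1)t) z' + rm z = 0`.
The denominator `(s-r-1) z' + (r+m+1)(t z' + r z)` of the identity is a constant multiple `κ W`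
of `W`: once the recurrence has eliminated `a_{k+1}`, comparing coefficients is a factorial
identity. Differentiating this relation and removing `z''` with the hypergeometric equation gives
`κ (t(t-1) W' - ((m-r+s-1)t - s(t-1)) W) = -(r+1) N`, with `N` the numerator of the identity;
dividing by `t(t-1) κ W` gives the claim.
-/

open Polynomial Finset

/-- `W(r,m,s)(t) = Σ_{j=0}^m (−1)^j C(r+m+1−j, m−j) C(s+m, j) t^{m−j}` in `ℚ[t]`. -/
noncomputable def W (r m s : ℕ) : Polynomial ℚ :=
  ∑ j ∈ range (m + 1),
    C ((-1 : ℚ) ^ j * (Nat.choose (r + m + 1 - j) (m - j) : ℚ) * (Nat.choose (s + m) j : ℚ))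
      * X ^ (m - j)

/-- `z(t) = Σ_{j=0}^m (−1)^j (C(r+j−1,j)·C(m,j)/C(s+j−1,j)) t^j`, the terminating
hypergeometric polynomial `₂F₁(r, −m; s; t)`. -/
noncomputable def z (r m s : ℕ) : Polynomial ℚ :=
  ∑ j ∈ range (m + 1),
    C ((-1 : ℚ) ^ j * (Nat.choose (r + j - 1) j : ℚ) * (Nat.choose m j : ℚ)
        / (Nat.choose (s + j - 1) j : ℚ)) * X ^ j

namespace Polynomial

theorem coeff_X_mul_derivative {R : Type*} [CommSemiring R] (p : R[X]) (n : ℕ) :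
    (X * derivative p).coeff n = n * p.coeff n := by
  cases n <;> simp [coeff_derivative, mul_comm]

theorem coeff_X_sq_mul_derivative_derivative {R : Type*} [CommRing R] (p : R[X]) (n : ℕ) :
    (X ^ 2 * derivative (derivative p)).coeff n = n * (n - 1) * p.coeff n := by
  rcases n with _ | _ | n <;> simp [coeff_X_pow_mul', coeff_derivative]; ring

end Polynomial

theorem Nat.cast_choose_succ_mul {R : Type*} [Ring R] (n k : ℕ) :
    (n.choose (k + 1) : R) * (k + 1) = n.choose k * (n - k) := by
  rcases le_or_gt k n with h | h
  · simpa [h] using congrArg (Nat.cast (R := R)) (Nat.choose_succ_right_eq n k)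
  · simp [Nat.choose_eq_zero_of_lt h, Nat.choose_eq_zero_of_lt (Nat.lt_succ_of_lt h)]

noncomputable def zCoeff (r m s k : ℕ) : ℚ :=
  (-1) ^ k * (r + k - 1).choose k * m.choose k / (s + k - 1).choose k

theorem coeff_z (r m s k : ℕ) : (z r m s).coeff k = zCoeff r m s k := by
  simp only [z, finsetSum_coeff, coeff_C_mul_X_pow, sum_ite_eq, mem_range, zCoeff]
  split_ifs with hk
  · rfl
  · simp [Nat.choose_eq_zero_of_lt (show m < k by omega)]

theorem zCoeff_succ {r s : ℕ} (m : ℕ) (hr : 0 < r) (hs : 0 < s) (k : ℕ) :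
    (k + 1) * (k + s) * zCoeff r m s (k + 1) = (k + r) * (k - m) * zCoeff r m s k := by
  obtain ⟨r, rfl⟩ : ∃ r', r = r' + 1 := ⟨r - 1, by omega⟩
  obtain ⟨s, rfl⟩ : ∃ s', s = s' + 1 := ⟨s - 1, by omega⟩
  have hk : (k + 1 : ℚ) ≠ 0 := by positivity
  have hsk : ((s + k).choose k : ℚ) ≠ 0 := Nat.cast_ne_zero.2 (Nat.choose_pos (by omega)).ne'
  have succ_choose_succ (n : ℕ) : ((n + 1).choose (k + 1) : ℚ) = (n + 1) * n.choose k / (k + 1) :=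
    eq_div_of_mul_eq hk (by exact_mod_cast (Nat.add_one_mul_choose_eq n k).symm)
  simp only [zCoeff, show ∀ a, a + 1 + (k + 1) - 1 = a + k + 1 by omega,
    show ∀ a, a + 1 + k - 1 = a + k by omega, succ_choose_succ,
    eq_div_of_mul_eq hk (Nat.cast_choose_succ_mul m k)]
  push_cast
  field_simp
  ring

theorem zCoeff_eq_zero (r s : ℕ) {m k : ℕ} (h : m < k) : zCoeff r m s k = 0 := by
  simp [zCoeff, Nat.choose_eq_zero_of_lt h]

theorem z_hypergeometric {r s : ℕ} (m : ℕ) (hr : 0 < r) (hs : 0 < s) :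
    X * derivative (derivative (z r m s)) - X ^ 2 * derivative (derivative (z r m s))
      + (s : ℚ[X]) * derivative (z r m s)
      - ((r : ℚ[X]) - (m : ℚ[X]) + 1) * (X * derivative (z r m s))
      + (r : ℚ[X]) * (m : ℚ[X]) * z r m s = 0 := by
  ext n
  simp only [coeff_add, coeff_sub, sub_mul, add_mul, mul_assoc, coeff_natCast_mul, one_mul,
    coeff_X_mul_derivative, coeff_X_sq_mul_derivative_derivative, coeff_derivative, coeff_z,
    coeff_zero]
  linear_combination zCoeff_succ m hr hs n

theorem coeff_W (r m s n : ℕ) : (W r m s).coeff n =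
    if n ≤ m then (-1 : ℚ) ^ (m - n) * (r + n + 1).choose n * (s + m).choose (m - n) else 0 := by
  simp only [W, finsetSum_coeff, coeff_C_mul_X_pow]
  split_ifs with hn
  · rw [sum_eq_single (m - n) (fun j hj hjn => if_neg (by grind)) (by grind)]
    grind
  · exact sum_eq_zero fun j hj => if_neg (by grind)

theorem W_ne_zero (r m s : ℕ) : W r m s ≠ 0 := fun h => by
  have hm := congrArg (coeff · m) h
  simp [coeff_W, (Nat.choose_pos (by omega : m ≤ r + m + 1)).ne'] at hm

noncomputable def wConst (r m s : ℕ) : ℚ :=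
  (-1) ^ m * r * (r + 1) / (s + m - 1).choose m

theorem wConst_ne_zero {r s : ℕ} (m : ℕ) (hr : 0 < r) (hs : 0 < s) : wConst r m s ≠ 0 := by
  have : ((s + m - 1).choose m : ℚ) ≠ 0 := Nat.cast_ne_zero.2 (Nat.choose_pos (by omega)).ne'
  simp only [wConst]
  positivity

open Nat in
theorem wConst_mul_coeff_W {r s : ℕ} (hr : 0 < r) (hs : 0 < s) {m n : ℕ} (hn : n ≤ m) :
    (n + s) * wConst r m s * ((-1) ^ (m - n) * (r + n + 1).choose n * (s + m).choose (m - n))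
      = (s + m) * (n + r) * (n + r + 1) * zCoeff r m s n := by
  obtain ⟨r, rfl⟩ : ∃ r', r = r' + 1 := ⟨r - 1, by omega⟩
  obtain ⟨s, rfl⟩ : ∃ s', s = s' + 1 := ⟨s - 1, by omega⟩
  obtain ⟨q, rfl⟩ := Nat.exists_eq_add_of_le hn
  -- in these variables every binomial coefficient has the form `(a + b).choose a`
  have hsign : (-1 : ℚ) ^ (n + q) * (-1) ^ q = (-1) ^ n := by
    rw [pow_add, mul_assoc, ← mul_pow]; norm_num
  simp only [wConst, zCoeff, Nat.add_sub_cancel_left, ← hsign,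
    show r + 1 + n + 1 = n + (r + 2) by ring, show s + 1 + (n + q) = q + (s + 1 + n) by ring,
    show r + 1 + n - 1 = n + r by omega, show s + 1 + n - 1 = n + s by omega,
    show q + (s + 1 + n) - 1 = n + q + s by omega, Nat.cast_add_choose]
  have hr2 : ((r + 2)! : ℚ) = (r + 2) * (r + 1) * r ! := by
    push_cast [Nat.factorial_succ]; ring
  have hnr2 : ((n + (r + 2))! : ℚ) = (n + r + 2) * (n + r + 1) * (n + r)! := by
    push_cast [show n + (r + 2) = n + r + 1 + 1 by ring, Nat.factorial_succ]; ring
  have hsn : ((s + 1 + n)! : ℚ) = (n + s + 1) * (n + s)! := by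
    push_cast [show s + 1 + n = n + s + 1 by ring, Nat.factorial_succ]; ring
  have hsnq : ((q + (s + 1 + n))! : ℚ) = (n + q + s + 1) * (n + q + s)! := by
    push_cast [show q + (s + 1 + n) = n + q + s + 1 by ring, Nat.factorial_succ]; ring
  rw [hr2, hnr2, hsn, hsnq]
  push_cast
  field_simp
  ring

theorem contiguous_eq_wConst_mul_W {r s : ℕ} (m : ℕ) (hr : 0 < r) (hs : 0 < s) :
    ((s : ℚ[X]) - (r : ℚ[X]) - 1) * derivative (z r m s)
      + ((r : ℚ[X]) + (m : ℚ[X]) + 1) * (X * derivative (z r m s) + (r : ℚ[X]) * z r m s)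
      = C (wConst r m s) * W r m s := by
  ext n
  simp only [coeff_add, coeff_sub, sub_mul, add_mul, mul_add, coeff_natCast_mul, one_mul,
    coeff_X_mul_derivative, coeff_derivative, coeff_z, coeff_C_mul, coeff_W]
  split_ifs with hn
  · refine mul_left_cancel₀ (by positivity : (n + s : ℚ) ≠ 0) ?_
    linear_combination (s - r - 1 : ℚ) * zCoeff_succ m hr hs n - wConst_mul_coeff_W hr hs hn
  · simp [zCoeff_eq_zero r s (not_le.1 hn), zCoeff_eq_zero r s (show m < n + 1 by omega)]

theorem wConst_mul_logDeriv_W {r s : ℕ} (m : ℕ) (hr : 0 < r) (hs : 0 < s) :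
    C (wConst r m s) * (X * (X - 1) * derivative (W r m s)
        - (((m : ℚ[X]) - (r : ℚ[X]) + (s : ℚ[X]) - 1) * X - (s : ℚ[X]) * (X - 1)) * W r m s)
      = -((r : ℚ[X]) + 1) * ((r : ℚ[X]) * ((m : ℚ[X]) + (s : ℚ[X])) * z r m s
          - ((r : ℚ[X]) + (m : ℚ[X]) + 1) * X
            * ((X - 1) * derivative (z r m s) + (r : ℚ[X]) * z r m s)) := by
  have hD := contiguous_eq_wConst_mul_W m hr hs
  have hD' := congrArg derivative hD
  simp only [derivative_add, derivative_mul, derivative_sub, derivative_natCast, derivative_one,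
    derivative_X, derivative_C, zero_mul, zero_add, sub_zero] at hD'
  linear_combination -X * (X - 1) * hD'
    + (((m : ℚ[X]) - (r : ℚ[X]) + (s : ℚ[X]) - 1) * X - (s : ℚ[X]) * (X - 1)) * hD
    - ((s : ℚ[X]) - (r : ℚ[X]) - 1 + ((r : ℚ[X]) + (m : ℚ[X]) + 1) * X) * z_hypergeometric m hr hs

theorem statement7_general (r m s : ℕ) (hr : 0 < r) (hs : 0 < s) :
    let φ : Polynomial ℚ →+* RatFunc ℚ := algebraMap (Polynomial ℚ) (RatFunc ℚ)
    let T : RatFunc ℚ := RatFunc.X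
    φ (derivative (W r m s)) / φ (W r m s)
      = -(s : RatFunc ℚ) / T + ((m : RatFunc ℚ) - r + s - 1) / (T - 1)
        - (((r : RatFunc ℚ) + 1) / (T * (T - 1))) *
          (((r : RatFunc ℚ) * ((m : RatFunc ℚ) + s) * φ (z r m s)
              - ((r : RatFunc ℚ) + m + 1) * T *
                ((T - 1) * φ (derivative (z r m s)) + (r : RatFunc ℚ) * φ (z r m s)))
            / (((s : RatFunc ℚ) - r - 1) * φ (derivative (z r m s))
                + ((r : RatFunc ℚ) + m + 1) *
                  (T * φ (derivative (z r m s)) + (r : RatFunc ℚ) * φ (z r m s)))) := by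
  intro φ T
  have hX : φ X = T := RatFunc.algebraMap_X
  have hT : T ≠ 0 := RatFunc.X_ne_zero
  have hT1 : T - 1 ≠ 0 := by
    rw [← hX, ← map_one φ, ← map_sub, ← C_1]
    exact RatFunc.algebraMap_ne_zero (X_sub_C_ne_zero 1)
  have hW : φ (W r m s) ≠ 0 := RatFunc.algebraMap_ne_zero (W_ne_zero r m s)
  have hκ : φ (C (wConst r m s)) ≠ 0 :=
    RatFunc.algebraMap_ne_zero (C_ne_zero.2 (wConst_ne_zero m hr hs))
  have hD := congrArg φ (contiguous_eq_wConst_mul_W m hr hs)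
  have hL := congrArg φ (wConst_mul_logDeriv_W m hr hs)
  simp only [map_add, map_sub, map_mul, map_neg, map_one, map_natCast, hX] at hD hL
  rw [hD]
  field_simp
  linear_combination hL

/-- The identity in `ℚ(t)`:
`W′/W = −s/t + (m−r+s−1)/(t−1) − ((r+1)/(t(t−1)))·(r(m+s)z − (r+m+1)t((t−1)z′+rz))/((s−r−1)z′ + (r+m+1)(tz′+rz))`. -/
theorem statement7 (r m s : ℕ) (hr : 0 < r) (hm : 0 < m) (hs : 0 < s) :
    let φ : Polynomial ℚ →+* RatFunc ℚ := algebraMap (Polynomial ℚ) (RatFunc ℚ)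
    let T : RatFunc ℚ := RatFunc.X
    φ (derivative (W r m s)) / φ (W r m s)
      = -(s : RatFunc ℚ) / T + ((m : RatFunc ℚ) - r + s - 1) / (T - 1)
        - (((r : RatFunc ℚ) + 1) / (T * (T - 1))) *
          (((r : RatFunc ℚ) * ((m : RatFunc ℚ) + s) * φ (z r m s)
              - ((r : RatFunc ℚ) + m + 1) * T *
                ((T - 1) * φ (derivative (z r m s)) + (r : RatFunc ℚ) * φ (z r m s)))
            / (((s : RatFunc ℚ) - r - 1) * φ (derivative (z r m s))
                + ((r : RatFunc ℚ) + m + 1) *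
                  (T * φ (derivative (z r m s)) + (r : RatFunc ℚ) * φ (z r m s)))) :=
  statement7_general r m s hr hs
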